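/- arXiv:2303.10358 — 3 statements merged into one kernel-verified Lean document; each statement's English description precedes it below -/
import Mathlib

section
/- Lipschitz dependence of the PF log-likelihood on parameters, true versus sieve (Lemma 3, first inequality): let τ, M, M_h, M_m > 0, d ∈ ℕ, Θ ⊆ ℝ a bounded interval, and B = [0, τ·max(e^{2M}, e^{M_h + M_m})]. Assume G_θ(x) and log g_θ(x) have partial derivatives in θ and in x that are bounded in absolute value by L on Θ × B. Then there exists a constant C > 0, depending only on τ, M, M_h, M_m and L, such that for all continuous h₁ : [0,τ] → ℝ with ‖h₁‖∞ ≤ M, all m₁ : [−1,1]^d → ℝ with ‖m₁‖∞ ≤ M, all continuous h₂ : [0,τ] → ℝ with ‖h₂‖∞ ≤ M_h, all m₂ : [−1,1]^d → ℝ with ‖m₂‖∞ ≤ M_m, and all θ₁, θ₂ ∈ Θ: sup over (T,δ,Z) ∈ [0,τ]×{0,1}×[−1,1]^d of |l(T,δ,Z; h₁,m₁,θ₁) − l(T,δ,Z; h₂,m₂,θ₂)| ≤ C·(|θ₁ − θ₂| + ‖h₁ − h₂‖∞ + ‖m₁ − m₂‖∞). -/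
/-- The PF observed log-likelihood:
`l(T,δ,Z; h,m,θ) = δ·log g_θ(e^{m(Z)} ∫₀^T e^{h(s)} ds) + δ·h(T) + δ·m(Z)
                   − G_θ(e^{m(Z)} ∫₀^T e^{h(s)} ds)`. -/
noncomputable def lPF (d : ℕ) (G g : ℝ → ℝ → ℝ) (h : ℝ → ℝ)
    (m : (Fin d → ℝ) → ℝ) (θ T δ : ℝ) (Z : Fin d → ℝ) : ℝ :=
  δ * Real.log (g θ (Real.exp (m Z) * ∫ s in (0:ℝ)..T, Real.exp (h s)))
    + δ * h T + δ * m Z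
    - G θ (Real.exp (m Z) * ∫ s in (0:ℝ)..T, Real.exp (h s))

lemma lipOn_of_exists_deriv {s : Set ℝ} (hs : Convex ℝ s) {f : ℝ → ℝ} {L : ℝ}
    (h : ∀ x ∈ s, ∃ D, HasDerivWithinAt f D s x ∧ |D| ≤ L) :
    ∀ x ∈ s, ∀ y ∈ s, |f x - f y| ≤ L * |x - y| := by
  classical
  set f' : ℝ → ℝ := fun t => if ht : t ∈ s then (h t ht).choose else 0 with hf'
  have hderiv : ∀ x ∈ s, HasDerivWithinAt f (f' x) s x := fun x hx => by
    simp only [hf', dif_pos hx]; exact (h x hx).choose_spec.1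
  have hbound : ∀ x ∈ s, ‖f' x‖ ≤ L := fun x hx => by
    simp only [hf', dif_pos hx, Real.norm_eq_abs]; exact (h x hx).choose_spec.2
  intro x hx y hy
  have := hs.norm_image_sub_le_of_norm_hasDerivWithin_le hderiv hbound hy hx
  simpa [Real.norm_eq_abs] using this

lemma exp_lip {R a b : ℝ} (ha : |a| ≤ R) (hb : |b| ≤ R) :
    |Real.exp a - Real.exp b| ≤ Real.exp R * |a - b| := by
  have := lipOn_of_exists_deriv (s := Set.Icc (-R) R) (convex_Icc _ _)
    (f := Real.exp) (L := Real.exp R)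
    (fun x hx => ⟨Real.exp x, (Real.hasDerivAt_exp x).hasDerivWithinAt,
      by rw [abs_of_pos (Real.exp_pos x)]; exact Real.exp_le_exp.mpr hx.2⟩)
  exact this a (abs_le.mp ha) b (abs_le.mp hb)

lemma final_ineq (L τ E Dθ Dh Dm : ℝ) (hL : 0 < L) (hτ : 0 < τ) (hE : 0 < E)
    (hDθ : 0 ≤ Dθ) (hDh : 0 ≤ Dh) (hDm : 0 ≤ Dm) :
    (L * (τ * E^2 * (Dh + Dm)) + L * Dθ) + Dh + Dm
      + (L * (τ * E^2 * (Dh + Dm)) + L * Dθ)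
    ≤ (2*L*τ*E^2 + 2*L + 1) * (Dθ + Dh + Dm) := by
  have haux : 0 ≤ L * (τ * E^2) := by positivity
  nlinarith [mul_nonneg haux hDh, mul_nonneg haux hDm, mul_nonneg haux hDθ,
    mul_nonneg hL.le hDh, mul_nonneg hL.le hDm, mul_nonneg hL.le hDθ]

lemma final_ineq0 (L τ E Dθ Dh Dm : ℝ) (hL : 0 < L) (hτ : 0 < τ) (hE : 0 < E)
    (hDθ : 0 ≤ Dθ) (hDh : 0 ≤ Dh) (hDm : 0 ≤ Dm) :
    L * (τ * E^2 * (Dh + Dm)) + L * Dθ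
    ≤ (2*L*τ*E^2 + 2*L + 1) * (Dθ + Dh + Dm) := by
  have haux : 0 ≤ L * (τ * E^2) := by positivity
  nlinarith [mul_nonneg haux hDh, mul_nonneg haux hDm, mul_nonneg haux hDθ,
    mul_nonneg hL.le hDh, mul_nonneg hL.le hDm, mul_nonneg hL.le hDθ]

/-- Lipschitz dependence of the PF log-likelihood on parameters, true versus
sieve element (Lemma 3, first inequality). -/
theorem pf_loglik_lipschitz_true_vs_sieve
    (τ M Mh Mm L : ℝ) (hτ : 0 < τ) (hM : 0 < M) (hMh : 0 < Mh) (hMm : 0 < Mm)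
    (hL : 0 < L) :
    ∃ C > 0, ∀ (d : ℕ) (Θ : Set ℝ), Bornology.IsBounded Θ → Θ.OrdConnected →
      ∀ G g : ℝ → ℝ → ℝ,
      -- g is the partial derivative of G in its second argument, and is positive
      (∀ θ ∈ Θ, ∀ x : ℝ, 0 ≤ x →
        HasDerivWithinAt (G θ) (g θ x) (Set.Ici 0) x ∧ 0 < g θ x) →
      -- |∂G/∂x| = |g| ≤ L on Θ × B, where B = [0, τ·max(e^{2M}, e^{Mh+Mm})]
      (∀ θ ∈ Θ, ∀ x ∈ Set.Icc (0:ℝ)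
          (τ * max (Real.exp (2 * M)) (Real.exp (Mh + Mm))), |g θ x| ≤ L) →
      -- |∂G/∂θ| ≤ L on Θ × B
      (∀ θ ∈ Θ, ∀ x ∈ Set.Icc (0:ℝ)
          (τ * max (Real.exp (2 * M)) (Real.exp (Mh + Mm))),
        ∃ D : ℝ, HasDerivWithinAt (fun t => G t x) D Θ θ ∧ |D| ≤ L) →
      -- |∂(log g)/∂x| ≤ L on Θ × B
      (∀ θ ∈ Θ, ∀ x ∈ Set.Icc (0:ℝ)
          (τ * max (Real.exp (2 * M)) (Real.exp (Mh + Mm))),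
        ∃ D : ℝ, HasDerivWithinAt (fun y => Real.log (g θ y))
          D (Set.Icc (0:ℝ) (τ * max (Real.exp (2 * M)) (Real.exp (Mh + Mm)))) x ∧
          |D| ≤ L) →
      -- |∂(log g)/∂θ| ≤ L on Θ × B
      (∀ θ ∈ Θ, ∀ x ∈ Set.Icc (0:ℝ)
          (τ * max (Real.exp (2 * M)) (Real.exp (Mh + Mm))),
        ∃ D : ℝ, HasDerivWithinAt (fun t => Real.log (g t x)) D Θ θ ∧ |D| ≤ L) →
      ∀ h₁ : ℝ → ℝ, ContinuousOn h₁ (Set.Icc 0 τ) →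
        (∀ t ∈ Set.Icc (0:ℝ) τ, |h₁ t| ≤ M) →
      ∀ m₁ : (Fin d → ℝ) → ℝ,
        (∀ z ∈ Set.Icc (fun _ : Fin d => (-1:ℝ)) (fun _ : Fin d => (1:ℝ)),
          |m₁ z| ≤ M) →
      ∀ h₂ : ℝ → ℝ, ContinuousOn h₂ (Set.Icc 0 τ) →
        (∀ t ∈ Set.Icc (0:ℝ) τ, |h₂ t| ≤ Mh) →
      ∀ m₂ : (Fin d → ℝ) → ℝ,
        (∀ z ∈ Set.Icc (fun _ : Fin d => (-1:ℝ)) (fun _ : Fin d => (1:ℝ)),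
          |m₂ z| ≤ Mm) →
      ∀ θ₁ ∈ Θ, ∀ θ₂ ∈ Θ,
      ∀ T ∈ Set.Icc (0:ℝ) τ, ∀ δ : ℝ, (δ = 0 ∨ δ = 1) →
      ∀ Z ∈ Set.Icc (fun _ : Fin d => (-1:ℝ)) (fun _ : Fin d => (1:ℝ)),
        |lPF d G g h₁ m₁ θ₁ T δ Z - lPF d G g h₂ m₂ θ₂ T δ Z| ≤
          C * (|θ₁ - θ₂|
            + sSup ((fun t => |h₁ t - h₂ t|) '' Set.Icc (0:ℝ) τ)
            + sSup ((fun z => |m₁ z - m₂ z|) ''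
                Set.Icc (fun _ : Fin d => (-1:ℝ)) (fun _ : Fin d => (1:ℝ)))) := by
  classical
  set R : ℝ := max M (max Mh Mm) with hRdef
  set E : ℝ := Real.exp R with hEdef
  have hE0 : 0 < E := Real.exp_pos R
  refine ⟨2*L*τ*E^2 + 2*L + 1, by positivity, ?_⟩
  intro d Θ hΘb hΘoc G g hGg hgL hGθ hlgx hlgθ h₁ hc₁ hb₁ m₁ hbm₁ h₂ hc₂ hb₂
    m₂ hbm₂ θ₁ hθ₁ θ₂ hθ₂ T hT δ hδ Z hZ
  set K : ℝ := max (Real.exp (2 * M)) (Real.exp (Mh + Mm)) with hKdef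
  set B : Set ℝ := Set.Icc (0:ℝ) (τ * K) with hBdef
  set Dθ : ℝ := |θ₁ - θ₂| with hDθdef
  set Dh : ℝ := sSup ((fun t => |h₁ t - h₂ t|) '' Set.Icc (0:ℝ) τ) with hDhdef
  set Dm : ℝ := sSup ((fun z => |m₁ z - m₂ z|) ''
      Set.Icc (fun _ : Fin d => (-1:ℝ)) (fun _ : Fin d => (1:ℝ))) with hDmdef
  set I₁ : ℝ := ∫ s in (0:ℝ)..T, Real.exp (h₁ s) with hI₁def
  set I₂ : ℝ := ∫ s in (0:ℝ)..T, Real.exp (h₂ s) with hI₂def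
  set x₁ : ℝ := Real.exp (m₁ Z) * I₁ with hx₁def
  set x₂ : ℝ := Real.exp (m₂ Z) * I₂ with hx₂def
  have hMR : M ≤ R := le_max_left _ _
  have hMhR : Mh ≤ R := le_trans (le_max_left _ _) (le_max_right _ _)
  have hMmR : Mm ≤ R := le_trans (le_max_right _ _) (le_max_right _ _)
  -- sup bounds
  have hDh_ub : ∀ t ∈ Set.Icc (0:ℝ) τ, |h₁ t - h₂ t| ≤ Dh := by
    have hbdd : BddAbove ((fun t => |h₁ t - h₂ t|) '' Set.Icc (0:ℝ) τ) := by
      refine ⟨M + Mh, ?_⟩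
      rintro _ ⟨t, ht, rfl⟩
      exact (abs_sub _ _).trans (add_le_add (hb₁ t ht) (hb₂ t ht))
    intro t ht
    exact le_csSup hbdd ⟨t, ht, rfl⟩
  have hDh0 : 0 ≤ Dh := le_trans (abs_nonneg _) (hDh_ub 0 ⟨le_refl _, hτ.le⟩)
  have hDm_ub : ∀ z ∈ Set.Icc (fun _ : Fin d => (-1:ℝ)) (fun _ : Fin d => (1:ℝ)),
      |m₁ z - m₂ z| ≤ Dm := by
    have hbdd : BddAbove ((fun z => |m₁ z - m₂ z|) ''
        Set.Icc (fun _ : Fin d => (-1:ℝ)) (fun _ : Fin d => (1:ℝ))) := by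
      refine ⟨M + Mm, ?_⟩
      rintro _ ⟨z, hz, rfl⟩
      exact (abs_sub _ _).trans (add_le_add (hbm₁ z hz) (hbm₂ z hz))
    intro z hz
    exact le_csSup hbdd ⟨z, hz, rfl⟩
  have hDm0 : 0 ≤ Dm := le_trans (abs_nonneg _) (hDm_ub Z hZ)
  -- integrability
  have huIcc : Set.uIcc (0:ℝ) T = Set.Icc 0 T := Set.uIcc_of_le hT.1
  have huIoc : Set.uIoc (0:ℝ) T = Set.Ioc 0 T := Set.uIoc_of_le hT.1
  have hIocsub : Set.Ioc (0:ℝ) T ⊆ Set.Icc 0 τ := fun s hs =>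
    ⟨hs.1.le, hs.2.trans hT.2⟩
  have hint : ∀ h : ℝ → ℝ, ContinuousOn h (Set.Icc 0 τ) →
      IntervalIntegrable (fun s => Real.exp (h s)) MeasureTheory.volume 0 T := by
    intro h hc
    apply ContinuousOn.intervalIntegrable
    rw [huIcc]
    exact Real.continuous_exp.comp_continuousOn
      (hc.mono (Set.Icc_subset_Icc_right hT.2))
  -- bounds on integrals
  have hIub : ∀ (h : ℝ → ℝ) (Mb : ℝ), (∀ t ∈ Set.Icc (0:ℝ) τ, |h t| ≤ Mb) →
      (∫ s in (0:ℝ)..T, Real.exp (h s)) ≤ τ * Real.exp Mb := by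
    intro h Mb hb
    have := intervalIntegral.norm_integral_le_of_norm_le_const
      (a := (0:ℝ)) (b := T) (C := Real.exp Mb)
      (f := fun s => Real.exp (h s)) ?_
    · rw [Real.norm_eq_abs] at this
      have hT0 : |T - 0| = T := by rw [sub_zero, abs_of_nonneg hT.1]
      rw [hT0] at this
      calc (∫ s in (0:ℝ)..T, Real.exp (h s)) ≤ |∫ s in (0:ℝ)..T, Real.exp (h s)| :=
            le_abs_self _
        _ ≤ Real.exp Mb * T := this
        _ ≤ Real.exp Mb * τ := by
            exact mul_le_mul_of_nonneg_left hT.2 (Real.exp_pos _).le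
        _ = τ * Real.exp Mb := mul_comm _ _
    · intro s hs
      rw [huIoc] at hs
      rw [Real.norm_eq_abs, abs_of_pos (Real.exp_pos _)]
      exact Real.exp_le_exp.mpr ((le_abs_self _).trans (hb s (hIocsub hs)))
  have hI₁0 : 0 ≤ I₁ :=
    intervalIntegral.integral_nonneg hT.1 (fun s _ => (Real.exp_pos _).le)
  have hI₂0 : 0 ≤ I₂ :=
    intervalIntegral.integral_nonneg hT.1 (fun s _ => (Real.exp_pos _).le)
  have hI₁ub : I₁ ≤ τ * Real.exp M := hIub h₁ M hb₁
  have hI₂ub : I₂ ≤ τ * Real.exp Mh := hIub h₂ Mh hb₂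
  -- membership of x₁, x₂ in B
  have hexpm₁ : Real.exp (m₁ Z) ≤ Real.exp M :=
    Real.exp_le_exp.mpr ((le_abs_self _).trans (hbm₁ Z hZ))
  have hexpm₂ : Real.exp (m₂ Z) ≤ Real.exp Mm :=
    Real.exp_le_exp.mpr ((le_abs_self _).trans (hbm₂ Z hZ))
  have hx₁B : x₁ ∈ B := by
    constructor
    · exact mul_nonneg (Real.exp_pos _).le hI₁0
    · have h1 : x₁ ≤ Real.exp M * (τ * Real.exp M) :=
        mul_le_mul hexpm₁ hI₁ub hI₁0 (Real.exp_pos _).le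
      have h2 : Real.exp M * (τ * Real.exp M) = τ * Real.exp (2 * M) := by
        rw [two_mul, Real.exp_add]; ring
      have h3 : τ * Real.exp (2 * M) ≤ τ * K :=
        mul_le_mul_of_nonneg_left (le_max_left _ _) hτ.le
      linarith
  have hx₂B : x₂ ∈ B := by
    constructor
    · exact mul_nonneg (Real.exp_pos _).le hI₂0
    · have h1 : x₂ ≤ Real.exp Mm * (τ * Real.exp Mh) :=
        mul_le_mul hexpm₂ hI₂ub hI₂0 (Real.exp_pos _).le
      have h2 : Real.exp Mm * (τ * Real.exp Mh) = τ * Real.exp (Mh + Mm) := by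
        rw [Real.exp_add]; ring
      have h3 : τ * Real.exp (Mh + Mm) ≤ τ * K :=
        mul_le_mul_of_nonneg_left (le_max_right _ _) hτ.le
      linarith
  -- |x₁ - x₂| bound
  have hΔexp : |Real.exp (m₁ Z) - Real.exp (m₂ Z)| ≤ E * Dm := by
    have h1 : |m₁ Z| ≤ R := (hbm₁ Z hZ).trans hMR
    have h2 : |m₂ Z| ≤ R := (hbm₂ Z hZ).trans hMmR
    exact (exp_lip h1 h2).trans (mul_le_mul_of_nonneg_left (hDm_ub Z hZ) hE0.le)
  have hΔI : |I₁ - I₂| ≤ τ * (E * Dh) := by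
    have hsub : I₁ - I₂ = ∫ s in (0:ℝ)..T,
        (Real.exp (h₁ s) - Real.exp (h₂ s)) := by
      rw [hI₁def, hI₂def, intervalIntegral.integral_sub (hint h₁ hc₁) (hint h₂ hc₂)]
    rw [hsub]
    have := intervalIntegral.norm_integral_le_of_norm_le_const
      (a := (0:ℝ)) (b := T) (C := E * Dh)
      (f := fun s => Real.exp (h₁ s) - Real.exp (h₂ s)) ?_
    · rw [Real.norm_eq_abs] at this
      have hT0 : |T - 0| = T := by rw [sub_zero, abs_of_nonneg hT.1]
      rw [hT0] at this
      calc |∫ s in (0:ℝ)..T, (Real.exp (h₁ s) - Real.exp (h₂ s))|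
          ≤ E * Dh * T := this
        _ ≤ E * Dh * τ := mul_le_mul_of_nonneg_left hT.2 (by positivity)
        _ = τ * (E * Dh) := by ring
    · intro s hs
      rw [huIoc] at hs
      have hsτ := hIocsub hs
      rw [Real.norm_eq_abs]
      have h1 : |h₁ s| ≤ R := (hb₁ s hsτ).trans hMR
      have h2 : |h₂ s| ≤ R := (hb₂ s hsτ).trans hMhR
      exact (exp_lip h1 h2).trans (mul_le_mul_of_nonneg_left (hDh_ub s hsτ) hE0.le)
  have hΔx : |x₁ - x₂| ≤ τ * E^2 * (Dh + Dm) := by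
    have hdecomp : x₁ - x₂ = (Real.exp (m₁ Z) - Real.exp (m₂ Z)) * I₁
        + Real.exp (m₂ Z) * (I₁ - I₂) := by rw [hx₁def, hx₂def]; ring
    have hEm₂ : Real.exp (m₂ Z) ≤ E :=
      Real.exp_le_exp.mpr (((le_abs_self _).trans (hbm₂ Z hZ)).trans hMmR)
    have hI₁E : I₁ ≤ τ * E := hI₁ub.trans
      (mul_le_mul_of_nonneg_left (Real.exp_le_exp.mpr hMR) hτ.le)
    calc |x₁ - x₂| ≤ |(Real.exp (m₁ Z) - Real.exp (m₂ Z)) * I₁|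
          + |Real.exp (m₂ Z) * (I₁ - I₂)| := by rw [hdecomp]; exact abs_add_le _ _
      _ = |Real.exp (m₁ Z) - Real.exp (m₂ Z)| * I₁
          + Real.exp (m₂ Z) * |I₁ - I₂| := by
            rw [abs_mul, abs_mul, abs_of_nonneg hI₁0,
              abs_of_pos (Real.exp_pos _)]
      _ ≤ (E * Dm) * (τ * E) + E * (τ * (E * Dh)) := by
            refine add_le_add ?_ ?_
            · exact mul_le_mul hΔexp hI₁E hI₁0 (by positivity)
            · exact mul_le_mul hEm₂ hΔI (abs_nonneg _) hE0.le
      _ = τ * E^2 * (Dh + Dm) := by ring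
  -- Lipschitz bounds via MVT
  have hΘconv : Convex ℝ Θ := convex_iff_ordConnected.mpr hΘoc
  have hBconv : Convex ℝ B := convex_Icc _ _
  have hGdiff : |G θ₁ x₁ - G θ₂ x₂| ≤ L * |x₁ - x₂| + L * Dθ := by
    have hGx : ∀ a ∈ B, ∀ b ∈ B, |G θ₁ a - G θ₁ b| ≤ L * |a - b| :=
      lipOn_of_exists_deriv hBconv (fun x hx =>
        ⟨g θ₁ x, ((hGg θ₁ hθ₁ x hx.1).1).mono Set.Icc_subset_Ici_self,
          hgL θ₁ hθ₁ x hx⟩)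
    have hGt : ∀ a ∈ Θ, ∀ b ∈ Θ, |G a x₂ - G b x₂| ≤ L * |a - b| :=
      lipOn_of_exists_deriv hΘconv (fun θ hθ => hGθ θ hθ x₂ hx₂B)
    calc |G θ₁ x₁ - G θ₂ x₂| ≤ |G θ₁ x₁ - G θ₁ x₂| + |G θ₁ x₂ - G θ₂ x₂| :=
          abs_sub_le _ _ _
      _ ≤ L * |x₁ - x₂| + L * Dθ :=
          add_le_add (hGx x₁ hx₁B x₂ hx₂B) (hGt θ₁ hθ₁ θ₂ hθ₂)
  have hlgdiff : |Real.log (g θ₁ x₁) - Real.log (g θ₂ x₂)| ≤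
      L * |x₁ - x₂| + L * Dθ := by
    have hlx : ∀ a ∈ B, ∀ b ∈ B,
        |Real.log (g θ₁ a) - Real.log (g θ₁ b)| ≤ L * |a - b| :=
      lipOn_of_exists_deriv hBconv (fun x hx => hlgx θ₁ hθ₁ x hx)
    have hlt : ∀ a ∈ Θ, ∀ b ∈ Θ,
        |Real.log (g a x₂) - Real.log (g b x₂)| ≤ L * |a - b| :=
      lipOn_of_exists_deriv hΘconv (fun θ hθ => hlgθ θ hθ x₂ hx₂B)
    calc |Real.log (g θ₁ x₁) - Real.log (g θ₂ x₂)|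
        ≤ |Real.log (g θ₁ x₁) - Real.log (g θ₁ x₂)|
          + |Real.log (g θ₁ x₂) - Real.log (g θ₂ x₂)| := abs_sub_le _ _ _
      _ ≤ L * |x₁ - x₂| + L * Dθ :=
          add_le_add (hlx x₁ hx₁B x₂ hx₂B) (hlt θ₁ hθ₁ θ₂ hθ₂)
  have hDθ0 : 0 ≤ Dθ := abs_nonneg _
  have haux : 0 ≤ L * (τ * E^2) := by positivity
  rcases hδ with rfl | rfl
  · -- δ = 0
    have hval : lPF d G g h₁ m₁ θ₁ T 0 Z - lPF d G g h₂ m₂ θ₂ T 0 Z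
        = -(G θ₁ x₁ - G θ₂ x₂) := by
      simp only [lPF, zero_mul, zero_add, zero_sub, hx₁def, hx₂def, hI₁def, hI₂def]
      ring
    rw [hval, abs_neg]
    have h1 : |G θ₁ x₁ - G θ₂ x₂| ≤ L * (τ * E^2 * (Dh + Dm)) + L * Dθ :=
      hGdiff.trans (add_le_add_left (mul_le_mul_of_nonneg_left hΔx hL.le) _)
    exact le_trans h1 (final_ineq0 L τ E Dθ Dh Dm hL hτ hE0 hDθ0 hDh0 hDm0)
  · -- δ = 1
    have hval : lPF d G g h₁ m₁ θ₁ T 1 Z - lPF d G g h₂ m₂ θ₂ T 1 Z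
        = (Real.log (g θ₁ x₁) - Real.log (g θ₂ x₂)) + (h₁ T - h₂ T)
          + (m₁ Z - m₂ Z) - (G θ₁ x₁ - G θ₂ x₂) := by
      simp only [lPF, one_mul, hx₁def, hx₂def, hI₁def, hI₂def]
      ring
    rw [hval]
    have habs : ∀ a b c e : ℝ, |a + b + c - e| ≤ |a| + |b| + |c| + |e| := by
      intro a b c e
      calc |a + b + c - e| ≤ |a + b + c| + |e| := abs_sub _ _
        _ ≤ (|a + b| + |c|) + |e| := add_le_add_left (abs_add_le _ _) _
        _ ≤ (|a| + |b| + |c|) + |e| := by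
            refine add_le_add_left (add_le_add_left (abs_add_le _ _) _) _
    refine le_trans (habs _ _ _ _) ?_
    have h1 : |G θ₁ x₁ - G θ₂ x₂| ≤ L * (τ * E^2 * (Dh + Dm)) + L * Dθ :=
      hGdiff.trans (add_le_add_left (mul_le_mul_of_nonneg_left hΔx hL.le) _)
    have h2 : |Real.log (g θ₁ x₁) - Real.log (g θ₂ x₂)|
        ≤ L * (τ * E^2 * (Dh + Dm)) + L * Dθ :=
      hlgdiff.trans (add_le_add_left (mul_le_mul_of_nonneg_left hΔx hL.le) _)
    have h3 : |h₁ T - h₂ T| ≤ Dh := hDh_ub T hT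
    have h4 : |m₁ Z - m₂ Z| ≤ Dm := hDm_ub Z hZ
    exact le_trans (add_le_add (add_le_add (add_le_add h2 h3) h4) h1)
      (final_ineq L τ E Dθ Dh Dm hL hτ hE0 hDθ0 hDh0 hDm0)
end

section
/- Lipschitz dependence of the FN log-likelihood on parameters, between two sieve elements (Lemma 4, second inequality): let τ, M_ν > 0, d ∈ ℕ, Θ ⊆ ℝ a bounded interval, and B = [0, τ·e^{M_ν}]. Assume G_θ(x) and log g_θ(x) have partial derivatives in θ and in x that are bounded in absolute value by L on Θ × B. Then there exists a constant C > 0, depending only on τ, M_ν and L, such that for all continuous ν₁, ν₂ : [0,τ]×[−1,1]^d → ℝ with ‖ν₁‖∞ ≤ M_ν and ‖ν₂‖∞ ≤ M_ν, and all θ₁, θ₂ ∈ Θ: sup over (T,δ,Z) ∈ [0,τ]×{0,1}×[−1,1]^d of |l(T,δ,Z; ν₁,θ₁) − l(T,δ,Z; ν₂,θ₂)| ≤ C·(|θ₁ − θ₂| + ‖ν₁ − ν₂‖∞). -/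
/-- The FN observed log-likelihood:
`l(T,δ,Z; ν,θ) = δ·log g_θ(∫₀^T e^{ν(s,Z)} ds) + δ·ν(T,Z) − G_θ(∫₀^T e^{ν(s,Z)} ds)`. -/
noncomputable def lFN (d : ℕ) (G g : ℝ → ℝ → ℝ) (ν : ℝ → (Fin d → ℝ) → ℝ)
    (θ T δ : ℝ) (Z : Fin d → ℝ) : ℝ :=
  δ * Real.log (g θ (∫ s in (0:ℝ)..T, Real.exp (ν s Z)))
    + δ * ν T Z
    - G θ (∫ s in (0:ℝ)..T, Real.exp (ν s Z))


/-- Mean value inequality on a convex set, existential-derivative form. -/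
theorem mvt_abs_of_exists {s : Set ℝ} (hs : Convex ℝ s) {f : ℝ → ℝ} {L : ℝ}
    (h : ∀ t ∈ s, ∃ D : ℝ, HasDerivWithinAt f D s t ∧ |D| ≤ L)
    {a b : ℝ} (ha : a ∈ s) (hb : b ∈ s) : |f b - f a| ≤ L * |b - a| := by
  classical
  set f' : ℝ → ℝ := fun t => if ht : t ∈ s then (h t ht).choose else 0 with hf'
  have hd : ∀ t ∈ s, HasDerivWithinAt f (f' t) s t := by
    intro t ht; simp only [hf', dif_pos ht]; exact (h t ht).choose_spec.1
  have hbd : ∀ t ∈ s, ‖f' t‖ ≤ L := by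
    intro t ht; simp only [hf', dif_pos ht, Real.norm_eq_abs]
    exact (h t ht).choose_spec.2
  have := hs.norm_image_sub_le_of_norm_hasDerivWithin_le hd hbd ha hb
  simpa [Real.norm_eq_abs] using this

theorem abs_exp_sub_exp {M a b : ℝ} (ha : |a| ≤ M) (hb : |b| ≤ M) :
    |Real.exp a - Real.exp b| ≤ Real.exp M * |a - b| := by
  have hc : Convex ℝ (Set.Icc (-M) M) := convex_Icc _ _
  have := hc.norm_image_sub_le_of_norm_hasDerivWithin_le
    (f := Real.exp) (f' := Real.exp)
    (fun x _ => (Real.hasDerivAt_exp x).hasDerivWithinAt)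
    (fun x hx => by
      rw [Real.norm_eq_abs, abs_of_pos (Real.exp_pos x)]
      exact Real.exp_le_exp.2 hx.2)
    (abs_le.1 hb) (abs_le.1 ha)
  simpa [Real.norm_eq_abs] using this

theorem habs3 (u v w : ℝ) : |u + v - w| ≤ |u| + |v| + |w| := by
  rw [sub_eq_add_neg]
  refine (abs_add_le _ _).trans ?_
  rw [abs_neg]
  exact add_le_add_left (abs_add_le u v) _

/-- Lipschitz dependence of the FN log-likelihood on parameters, between two
sieve elements (Lemma 4, second inequality). -/
theorem fn_loglik_lipschitz_sieve_vs_sieve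
    (τ Mν L : ℝ) (hτ : 0 < τ) (hMν : 0 < Mν) (hL : 0 < L) :
    ∃ C > 0, ∀ (d : ℕ) (Θ : Set ℝ), Bornology.IsBounded Θ → Θ.OrdConnected →
      ∀ G g : ℝ → ℝ → ℝ,
      -- g is the partial derivative of G in its second argument, and is positive
      (∀ θ ∈ Θ, ∀ x : ℝ, 0 ≤ x →
        HasDerivWithinAt (G θ) (g θ x) (Set.Ici 0) x ∧ 0 < g θ x) →
      -- |∂G/∂x| = |g| ≤ L on Θ × B, where B = [0, τ·e^{Mν}]
      (∀ θ ∈ Θ, ∀ x ∈ Set.Icc (0:ℝ) (τ * Real.exp Mν),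
        |g θ x| ≤ L) →
      -- |∂G/∂θ| ≤ L on Θ × B
      (∀ θ ∈ Θ, ∀ x ∈ Set.Icc (0:ℝ) (τ * Real.exp Mν),
        ∃ D : ℝ, HasDerivWithinAt (fun t => G t x) D Θ θ ∧ |D| ≤ L) →
      -- |∂(log g)/∂x| ≤ L on Θ × B
      (∀ θ ∈ Θ, ∀ x ∈ Set.Icc (0:ℝ) (τ * Real.exp Mν),
        ∃ D : ℝ, HasDerivWithinAt (fun y => Real.log (g θ y))
          D (Set.Icc (0:ℝ) (τ * Real.exp Mν)) x ∧ |D| ≤ L) →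
      -- |∂(log g)/∂θ| ≤ L on Θ × B
      (∀ θ ∈ Θ, ∀ x ∈ Set.Icc (0:ℝ) (τ * Real.exp Mν),
        ∃ D : ℝ, HasDerivWithinAt (fun t => Real.log (g t x)) D Θ θ ∧ |D| ≤ L) →
      ∀ ν₁ : ℝ → (Fin d → ℝ) → ℝ,
        ContinuousOn (fun p : ℝ × (Fin d → ℝ) => ν₁ p.1 p.2)
          (Set.Icc (0:ℝ) τ ×ˢ
            Set.Icc (fun _ : Fin d => (-1:ℝ)) (fun _ : Fin d => (1:ℝ))) →
        (∀ t ∈ Set.Icc (0:ℝ) τ,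
          ∀ z ∈ Set.Icc (fun _ : Fin d => (-1:ℝ)) (fun _ : Fin d => (1:ℝ)),
            |ν₁ t z| ≤ Mν) →
      ∀ ν₂ : ℝ → (Fin d → ℝ) → ℝ,
        ContinuousOn (fun p : ℝ × (Fin d → ℝ) => ν₂ p.1 p.2)
          (Set.Icc (0:ℝ) τ ×ˢ
            Set.Icc (fun _ : Fin d => (-1:ℝ)) (fun _ : Fin d => (1:ℝ))) →
        (∀ t ∈ Set.Icc (0:ℝ) τ,
          ∀ z ∈ Set.Icc (fun _ : Fin d => (-1:ℝ)) (fun _ : Fin d => (1:ℝ)),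
            |ν₂ t z| ≤ Mν) →
      ∀ θ₁ ∈ Θ, ∀ θ₂ ∈ Θ,
      ∀ T ∈ Set.Icc (0:ℝ) τ, ∀ δ : ℝ, (δ = 0 ∨ δ = 1) →
      ∀ Z ∈ Set.Icc (fun _ : Fin d => (-1:ℝ)) (fun _ : Fin d => (1:ℝ)),
        |lFN d G g ν₁ θ₁ T δ Z - lFN d G g ν₂ θ₂ T δ Z| ≤
          C * (|θ₁ - θ₂|
            + sSup ((fun p : ℝ × (Fin d → ℝ) => |ν₁ p.1 p.2 - ν₂ p.1 p.2|) ''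
                (Set.Icc (0:ℝ) τ ×ˢ
                  Set.Icc (fun _ : Fin d => (-1:ℝ)) (fun _ : Fin d => (1:ℝ))))) := by
  simp only [lFN]
  refine ⟨2*L + 2*L*(τ*Real.exp Mν) + 1, by positivity, ?_⟩
  intro d Θ hΘb hΘo G g hGg h2 h3 h4 h5 ν₁ hν₁c hν₁b ν₂ hν₂c hν₂b θ₁ hθ₁ θ₂ hθ₂ T hT δ hδ Z hZ
  have hΘc : Convex ℝ Θ := hΘo.convex
  have hBc : Convex ℝ (Set.Icc (0:ℝ) (τ * Real.exp Mν)) := convex_Icc _ _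
  set S := sSup ((fun p : ℝ × (Fin d → ℝ) => |ν₁ p.1 p.2 - ν₂ p.1 p.2|) ''
      (Set.Icc (0:ℝ) τ ×ˢ
        Set.Icc (fun _ : Fin d => (-1:ℝ)) (fun _ : Fin d => (1:ℝ)))) with hS
  have hbdd : BddAbove ((fun p : ℝ × (Fin d → ℝ) => |ν₁ p.1 p.2 - ν₂ p.1 p.2|) ''
      (Set.Icc (0:ℝ) τ ×ˢ
        Set.Icc (fun _ : Fin d => (-1:ℝ)) (fun _ : Fin d => (1:ℝ)))) := by
    refine ⟨2 * Mν, ?_⟩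
    rintro y ⟨p, hp, rfl⟩
    have h1 := hν₁b p.1 hp.1 p.2 hp.2
    have h2' := hν₂b p.1 hp.1 p.2 hp.2
    have h3' := abs_sub (ν₁ p.1 p.2) (ν₂ p.1 p.2)
    linarith
  have hSub : ∀ t ∈ Set.Icc (0:ℝ) τ, |ν₁ t Z - ν₂ t Z| ≤ S := by
    intro t ht
    exact le_csSup hbdd ⟨(t, Z), ⟨ht, hZ⟩, rfl⟩
  have hS0 : 0 ≤ S := le_trans (abs_nonneg _) (hSub T hT)
  -- continuity
  have hc1 : ContinuousOn (fun s => Real.exp (ν₁ s Z)) (Set.Icc (0:ℝ) τ) :=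
    Real.continuous_exp.comp_continuousOn
      (hν₁c.comp ((continuous_id.prodMk continuous_const).continuousOn)
        (fun s hs => ⟨hs, hZ⟩))
  have hc2 : ContinuousOn (fun s => Real.exp (ν₂ s Z)) (Set.Icc (0:ℝ) τ) :=
    Real.continuous_exp.comp_continuousOn
      (hν₂c.comp ((continuous_id.prodMk continuous_const).continuousOn)
        (fun s hs => ⟨hs, hZ⟩))
  have hsub : Set.uIcc (0:ℝ) T ⊆ Set.Icc (0:ℝ) τ := by
    rw [Set.uIcc_of_le hT.1]; exact Set.Icc_subset_Icc le_rfl hT.2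
  have hint1 : IntervalIntegrable (fun s => Real.exp (ν₁ s Z)) MeasureTheory.volume 0 T :=
    (hc1.mono hsub).intervalIntegrable
  have hint2 : IntervalIntegrable (fun s => Real.exp (ν₂ s Z)) MeasureTheory.volume 0 T :=
    (hc2.mono hsub).intervalIntegrable
  set x₁ := ∫ s in (0:ℝ)..T, Real.exp (ν₁ s Z) with hx₁def
  set x₂ := ∫ s in (0:ℝ)..T, Real.exp (ν₂ s Z) with hx₂def
  have hmemIoc : ∀ s ∈ Set.uIoc (0:ℝ) T, s ∈ Set.Icc (0:ℝ) τ := by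
    intro s hs
    rw [Set.uIoc_of_le hT.1] at hs
    exact ⟨hs.1.le, hs.2.trans hT.2⟩
  have hxB : ∀ (ν : ℝ → (Fin d → ℝ) → ℝ),
      (∀ t ∈ Set.Icc (0:ℝ) τ,
        ∀ z ∈ Set.Icc (fun _ : Fin d => (-1:ℝ)) (fun _ : Fin d => (1:ℝ)), |ν t z| ≤ Mν) →
      (∫ s in (0:ℝ)..T, Real.exp (ν s Z)) ∈ Set.Icc (0:ℝ) (τ * Real.exp Mν) := by
    intro ν hν
    constructor
    · exact intervalIntegral.integral_nonneg hT.1 (fun s _ => (Real.exp_pos _).le)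
    · have hb := intervalIntegral.norm_integral_le_of_norm_le_const (C := Real.exp Mν)
        (f := fun s => Real.exp (ν s Z)) (a := 0) (b := T) (fun s hs => by
          rw [Real.norm_eq_abs, abs_of_pos (Real.exp_pos _)]
          exact Real.exp_le_exp.2 (abs_le.1 (hν s (hmemIoc s hs) Z hZ)).2)
      rw [Real.norm_eq_abs, sub_zero, abs_of_nonneg hT.1] at hb
      calc (∫ s in (0:ℝ)..T, Real.exp (ν s Z)) ≤ |∫ s in (0:ℝ)..T, Real.exp (ν s Z)| :=
            le_abs_self _
        _ ≤ Real.exp Mν * T := hb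
        _ ≤ τ * Real.exp Mν := by nlinarith [Real.exp_pos Mν, hT.2]
  have hx₁B : x₁ ∈ Set.Icc (0:ℝ) (τ * Real.exp Mν) := hxB ν₁ hν₁b
  have hx₂B : x₂ ∈ Set.Icc (0:ℝ) (τ * Real.exp Mν) := hxB ν₂ hν₂b
  have hxdiff : |x₁ - x₂| ≤ τ * Real.exp Mν * S := by
    have heq : x₁ - x₂ = ∫ s in (0:ℝ)..T, (Real.exp (ν₁ s Z) - Real.exp (ν₂ s Z)) :=
      (intervalIntegral.integral_sub hint1 hint2).symm
    rw [heq]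
    have hb := intervalIntegral.norm_integral_le_of_norm_le_const (C := Real.exp Mν * S)
      (f := fun s => Real.exp (ν₁ s Z) - Real.exp (ν₂ s Z)) (a := 0) (b := T)
      (fun s hs => by
        rw [Real.norm_eq_abs]
        calc |Real.exp (ν₁ s Z) - Real.exp (ν₂ s Z)|
            ≤ Real.exp Mν * |ν₁ s Z - ν₂ s Z| :=
              abs_exp_sub_exp (hν₁b s (hmemIoc s hs) Z hZ) (hν₂b s (hmemIoc s hs) Z hZ)
          _ ≤ Real.exp Mν * S :=
              mul_le_mul_of_nonneg_left (hSub s (hmemIoc s hs)) (Real.exp_pos _).le)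
    rw [Real.norm_eq_abs, sub_zero, abs_of_nonneg hT.1] at hb
    calc |∫ s in (0:ℝ)..T, (Real.exp (ν₁ s Z) - Real.exp (ν₂ s Z))|
        ≤ Real.exp Mν * S * T := hb
      _ ≤ τ * Real.exp Mν * S := by
          nlinarith [mul_le_mul_of_nonneg_left hT.2
            (mul_nonneg (Real.exp_pos Mν).le hS0)]
  -- mean value bounds
  have hGθ : |G θ₁ x₁ - G θ₂ x₁| ≤ L * |θ₁ - θ₂| :=
    mvt_abs_of_exists hΘc (f := fun t => G t x₁) (fun t ht => h3 t ht x₁ hx₁B) hθ₂ hθ₁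
  have hGx : |G θ₂ x₁ - G θ₂ x₂| ≤ L * |x₁ - x₂| :=
    mvt_abs_of_exists hBc (f := G θ₂)
      (fun y hy => ⟨g θ₂ y, ((hGg θ₂ hθ₂ y hy.1).1).mono Set.Icc_subset_Ici_self,
        h2 θ₂ hθ₂ y hy⟩) hx₂B hx₁B
  have hlgθ : |Real.log (g θ₁ x₁) - Real.log (g θ₂ x₁)| ≤ L * |θ₁ - θ₂| :=
    mvt_abs_of_exists hΘc (f := fun t => Real.log (g t x₁))
      (fun t ht => h5 t ht x₁ hx₁B) hθ₂ hθ₁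
  have hlgx : |Real.log (g θ₂ x₁) - Real.log (g θ₂ x₂)| ≤ L * |x₁ - x₂| :=
    mvt_abs_of_exists hBc (f := fun y => Real.log (g θ₂ y))
      (fun y hy => h4 θ₂ hθ₂ y hy) hx₂B hx₁B
  have hνT : |ν₁ T Z - ν₂ T Z| ≤ S := hSub T hT
  have hδ1 : |δ| ≤ 1 := by rcases hδ with rfl | rfl <;> norm_num
  -- assemble
  have hA : |Real.log (g θ₁ x₁) - Real.log (g θ₂ x₂)| ≤ L * |θ₁ - θ₂| + L * |x₁ - x₂| := by
    calc |Real.log (g θ₁ x₁) - Real.log (g θ₂ x₂)|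
        ≤ |Real.log (g θ₁ x₁) - Real.log (g θ₂ x₁)|
          + |Real.log (g θ₂ x₁) - Real.log (g θ₂ x₂)| := abs_sub_le _ _ _
      _ ≤ _ := add_le_add hlgθ hlgx
  have hB : |G θ₁ x₁ - G θ₂ x₂| ≤ L * |θ₁ - θ₂| + L * |x₁ - x₂| := by
    calc |G θ₁ x₁ - G θ₂ x₂|
        ≤ |G θ₁ x₁ - G θ₂ x₁| + |G θ₂ x₁ - G θ₂ x₂| := abs_sub_le _ _ _
      _ ≤ _ := add_le_add hGθ hGx
  have key : (δ * Real.log (g θ₁ x₁) + δ * ν₁ T Z - G θ₁ x₁)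
      - (δ * Real.log (g θ₂ x₂) + δ * ν₂ T Z - G θ₂ x₂)
      = δ * (Real.log (g θ₁ x₁) - Real.log (g θ₂ x₂))
        + δ * (ν₁ T Z - ν₂ T Z) - (G θ₁ x₁ - G θ₂ x₂) := by ring
  rw [key]
  have h3' := habs3 (δ * (Real.log (g θ₁ x₁) - Real.log (g θ₂ x₂)))
    (δ * (ν₁ T Z - ν₂ T Z)) (G θ₁ x₁ - G θ₂ x₂)
  have e1 : |δ * (Real.log (g θ₁ x₁) - Real.log (g θ₂ x₂))|
      ≤ |Real.log (g θ₁ x₁) - Real.log (g θ₂ x₂)| := by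
    rw [abs_mul]
    nlinarith [abs_nonneg (Real.log (g θ₁ x₁) - Real.log (g θ₂ x₂)), abs_nonneg δ]
  have e2 : |δ * (ν₁ T Z - ν₂ T Z)| ≤ |ν₁ T Z - ν₂ T Z| := by
    rw [abs_mul]
    nlinarith [abs_nonneg (ν₁ T Z - ν₂ T Z), abs_nonneg δ]
  have hLx : L * |x₁ - x₂| ≤ L * (τ * Real.exp Mν * S) :=
    mul_le_mul_of_nonneg_left hxdiff hL.le
  nlinarith [h3', e1, e2, hA, hB, hνT, hLx, hS0, abs_nonneg (θ₁ - θ₂),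
    mul_nonneg (mul_nonneg hL.le hτ.le) (Real.exp_pos Mν).le, hL.le]
end

section
/- Pointwise log-ratio inequality used in Step 2 of the proofs of Theorems 1 and 2: for all real numbers p > 0 and q > 0, p·(log p − log q)² ≤ 4·max(1, p/q)·(√p − √q)². In particular, if C₁ ≤ p/q ≤ C₂ for constants 0 < C₁ ≤ C₂, then p·(log √(p/q))² ≤ max(1, C₂)·(√p − √q)². -/
open Real

lemma log_diff_sq_le_aux (x y : ℝ) (hx : 0 < x) (hy : 0 < y) (hxy : y ≤ x) :
    (Real.log x - Real.log y) ^ 2 ≤ (x - y) ^ 2 / y ^ 2 := by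
  have h1 : Real.log x - Real.log y ≤ (x - y) / y := by
    rw [← Real.log_div (ne_of_gt hx) (ne_of_gt hy)]
    have h := Real.log_le_sub_one_of_pos (div_pos hx hy)
    have : x / y - 1 = (x - y) / y := by field_simp
    linarith
  have h0 : 0 ≤ Real.log x - Real.log y :=
    sub_nonneg.2 (Real.log_le_log hy hxy)
  calc (Real.log x - Real.log y) ^ 2 ≤ ((x - y) / y) ^ 2 := by
        exact pow_le_pow_left₀ h0 h1 2
    _ = (x - y) ^ 2 / y ^ 2 := by rw [div_pow]

lemma main_ineq (p q : ℝ) (hp : 0 < p) (hq : 0 < q) :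
    p * (Real.log p - Real.log q) ^ 2 ≤
      4 * max 1 (p / q) * (Real.sqrt p - Real.sqrt q) ^ 2 := by
  have hsp : 0 < Real.sqrt p := Real.sqrt_pos.2 hp
  have hsq : 0 < Real.sqrt q := Real.sqrt_pos.2 hq
  have hspp : Real.sqrt p ^ 2 = p := Real.sq_sqrt hp.le
  have hsqq : Real.sqrt q ^ 2 = q := Real.sq_sqrt hq.le
  have hlp : Real.log p = 2 * Real.log (Real.sqrt p) := by
    rw [Real.log_sqrt hp.le]; ring
  have hlq : Real.log q = 2 * Real.log (Real.sqrt q) := by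
    rw [Real.log_sqrt hq.le]; ring
  have hsum : (Real.log p - Real.log q) ^ 2
      = 4 * (Real.log (Real.sqrt p) - Real.log (Real.sqrt q)) ^ 2 := by
    rw [hlp, hlq]; ring
  rcases le_total q p with h | h
  · have hs : Real.sqrt q ≤ Real.sqrt p := Real.sqrt_le_sqrt h
    have key := log_diff_sq_le_aux (Real.sqrt p) (Real.sqrt q) hsp hsq hs
    rw [hsqq] at key
    have hmax : max 1 (p / q) = p / q := max_eq_right ((one_le_div hq).2 h)
    rw [hsum, hmax]
    have : p * (4 * (Real.log (Real.sqrt p) - Real.log (Real.sqrt q)) ^ 2)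
        ≤ p * (4 * ((Real.sqrt p - Real.sqrt q) ^ 2 / q)) := by
      apply mul_le_mul_of_nonneg_left _ hp.le
      linarith
    calc p * (4 * (Real.log (Real.sqrt p) - Real.log (Real.sqrt q)) ^ 2)
        ≤ p * (4 * ((Real.sqrt p - Real.sqrt q) ^ 2 / q)) := this
      _ = 4 * (p / q) * (Real.sqrt p - Real.sqrt q) ^ 2 := by field_simp
  · have hs : Real.sqrt p ≤ Real.sqrt q := Real.sqrt_le_sqrt h
    have key := log_diff_sq_le_aux (Real.sqrt q) (Real.sqrt p) hsq hsp hs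
    rw [hspp] at key
    have hsq2 : (Real.log (Real.sqrt p) - Real.log (Real.sqrt q)) ^ 2
        = (Real.log (Real.sqrt q) - Real.log (Real.sqrt p)) ^ 2 := by ring
    have hdiff : (Real.sqrt q - Real.sqrt p) ^ 2 = (Real.sqrt p - Real.sqrt q) ^ 2 := by ring
    rw [hsum, hsq2]
    have h1 : p * (4 * (Real.log (Real.sqrt q) - Real.log (Real.sqrt p)) ^ 2)
        ≤ p * (4 * ((Real.sqrt q - Real.sqrt p) ^ 2 / p)) := by
      apply mul_le_mul_of_nonneg_left _ hp.le
      linarith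
    have h2 : p * (4 * ((Real.sqrt q - Real.sqrt p) ^ 2 / p))
        = 4 * 1 * (Real.sqrt p - Real.sqrt q) ^ 2 := by
      rw [hdiff]; field_simp
    have h3 : 4 * 1 * (Real.sqrt p - Real.sqrt q) ^ 2
        ≤ 4 * max 1 (p / q) * (Real.sqrt p - Real.sqrt q) ^ 2 := by
      apply mul_le_mul_of_nonneg_right _ (sq_nonneg _)
      have := le_max_left (1 : ℝ) (p / q)
      linarith
    linarith

/-- Pointwise log-ratio inequality used in Step 2 of the proofs of
Theorems 1 and 2: for `p, q > 0`,
`p·(log p − log q)² ≤ 4·max(1, p/q)·(√p − √q)²`; in particular, if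
`0 < C₁ ≤ p/q ≤ C₂`, then `p·(log √(p/q))² ≤ max(1, C₂)·(√p − √q)²`. -/
theorem log_ratio_inequality (p q : ℝ) (hp : 0 < p) (hq : 0 < q) :
    p * (Real.log p - Real.log q) ^ 2 ≤
      4 * max 1 (p / q) * (Real.sqrt p - Real.sqrt q) ^ 2 ∧
    ∀ C₁ C₂ : ℝ, 0 < C₁ → C₁ ≤ C₂ → C₁ ≤ p / q → p / q ≤ C₂ →
      p * (Real.log (Real.sqrt (p / q))) ^ 2 ≤
        max 1 C₂ * (Real.sqrt p - Real.sqrt q) ^ 2 := by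
  have hmain := main_ineq p q hp hq
  refine ⟨hmain, ?_⟩
  intro C₁ C₂ hC₁ hC₁₂ hlow hhigh
  have hpq : 0 < p / q := div_pos hp hq
  have hlog : Real.log (Real.sqrt (p / q)) = (Real.log p - Real.log q) / 2 := by
    rw [Real.log_sqrt hpq.le, Real.log_div (ne_of_gt hp) (ne_of_gt hq)]
  have hmaxle : max 1 (p / q) ≤ max 1 C₂ := max_le_max le_rfl hhigh
  have h1 : p * (Real.log (Real.sqrt (p / q))) ^ 2
      = p * (Real.log p - Real.log q) ^ 2 / 4 := by
    rw [hlog]; ring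
  rw [h1]
  have h2 : 4 * max 1 (p / q) * (Real.sqrt p - Real.sqrt q) ^ 2
      ≤ 4 * max 1 C₂ * (Real.sqrt p - Real.sqrt q) ^ 2 := by
    apply mul_le_mul_of_nonneg_right _ (sq_nonneg _)
    linarith
  linarith
end
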